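/- Consider a biinfinite inverse sequence of groups 𝒢 = (G_n, φ_n : G_n → G_{n-1})_{n ∈ ℤ}. Assume: (a) 𝒢 is rigid (for all m ≥ 1 and n ∈ ℤ there are isomorphisms ψ_k : G_k → G_{n+k}, 0 ≤ k ≤ m, commuting with the bonding maps); (b) the sequence F_n := im(φ_1 ∘ … ∘ φ_n) stabilizes, i.e., F_1 = F_2; (c) G_0 is finitely generated and residually finite. Then, setting G'_n := im(φ_{n+1}) ⊆ G_n, each restricted bonding map φ_n|_{G'_n} : G'_n → G'_{n-1} is an isomorphism onto G'_{n-1}. -/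

import Mathlib

variable {G : ℤ → Type*} [∀ n, Group (G n)]

/-- Transport a group along an equality of indices. -/
def castHom {G : ℤ → Type*} [∀ n, Group (G n)] {a b : ℤ} (h : a = b) : G a →* G b := by
  subst h; exact MonoidHom.id _

/-- The composite bonding homomorphism `G (n + m) →* G n` of the inverse
sequence with bonding maps `φ k : G (k+1) →* G k`. -/
def chain (φ : ∀ n : ℤ, G (n + 1) →* G n) (n : ℤ) : (m : ℕ) → G (n + m) →* G n
  | 0 => castHom (by simp)
  | (m + 1) => (chain φ n m).comp ((φ (n + m)).comp (castHom (by push_cast; ring)))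

/-- `F n` is the image of `G n` in `G 0` under the composite bonding map. -/
def F (φ : ∀ n : ℤ, G (n + 1) →* G n) (n : ℕ) : Subgroup (G 0) :=
  (chain φ 0 n).range

/-- Rigidity of a biinfinite inverse sequence of groups: for every `m ≥ 1` and every `n ∈ ℤ`,
the segment `G 0 ← G 1 ← ⋯ ← G m` is isomorphic, via vertical isomorphisms commuting with the
bonding maps, to the segment `G n ← G (n+1) ← ⋯ ← G (n+m)`. -/
def Rigid (φ : ∀ n : ℤ, G (n + 1) →* G n) : Prop :=
  ∀ m : ℕ, 1 ≤ m → ∀ n : ℤ,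
    ∃ ψ : ∀ k : ℕ, k ≤ m → (G (k : ℤ) ≃* G (n + (k : ℤ))),
      ∀ (k : ℕ) (hk : k + 1 ≤ m) (x : G ((k : ℤ) + 1)),
        ψ k (Nat.le_of_succ_le hk) (φ (k : ℤ) x) =
          φ (n + (k : ℤ))
            (castHom (by push_cast; ring)
              (ψ (k + 1) hk (castHom (by push_cast; ring) x)))

/-- A group is residually finite if every nontrivial element admits a homomorphism to some
finite group under which it stays nontrivial. -/
def ResiduallyFinite (H : Type*) [Group H] : Prop :=
  ∀ g : H, g ≠ 1 → ∃ (K : Type) (_ : Group K) (_ : Finite K) (φ : H →* K), φ g ≠ 1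

/- ### Auxiliary lemmas -/

theorem castHom_trans {a b c : ℤ} (h1 : a = b) (h2 : b = c) (x : G a) :
    castHom h2 (castHom h1 x) = castHom (h1.trans h2) x := by
  subst h1; subst h2; rfl

theorem castHom_rfl {a : ℤ} (h : a = a) (x : G a) : castHom h x = x := rfl

theorem castHom_phi (φ : ∀ n : ℤ, G (n + 1) →* G n) {a b : ℤ} (h : a = b) (h1 : a + 1 = b + 1)
    (x : G (a + 1)) : castHom h (φ a x) = φ b (castHom h1 x) := by
  subst h; rfl

theorem castHom_inj {a b : ℤ} (h : a = b) : Function.Injective (castHom (G := G) h) := by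
  subst h; exact fun x y hxy => hxy

/-- Finitely many homomorphisms from a finitely generated group to a finite group. -/
theorem finite_monoidHom {H K : Type*} [Group H] [Group K] (hfg : Group.FG H) [Finite K] :
    Finite (H →* K) := by
  obtain ⟨S, hS, hSfin⟩ := Group.fg_iff.mp hfg
  have hinj : Function.Injective (fun f : H →* K => (fun s : S => f s)) := by
    intro f g h
    refine MonoidHom.eq_of_eqOn_dense hS ?_
    intro x hx
    exact congrFun h ⟨x, hx⟩
  have : Finite S := hSfin
  exact Finite.of_injective _ hinj

/-- Malcev: a finitely generated residually finite group is Hopfian. -/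
theorem hopfian {H : Type*} [Group H] (hfg : Group.FG H) (hrf : ResiduallyFinite H)
    (e : H →* H) (hsurj : Function.Surjective e) : Function.Injective e := by
  rw [injective_iff_map_eq_one]
  intro g hg
  by_contra hne
  obtain ⟨K, _, _, f, hf⟩ := hrf g hne
  have : Finite (H →* K) := finite_monoidHom hfg
  have hTinj : Function.Injective (fun h : H →* K => h.comp e) := by
    intro h1 h2 hh
    ext x
    obtain ⟨y, rfl⟩ := hsurj x
    exact DFunLike.congr_fun hh y
  obtain ⟨h, hh⟩ := Finite.injective_iff_surjective.mp hTinj f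
  have hcg : h (e g) = f g := DFunLike.congr_fun hh g
  rw [hg, map_one] at hcg
  exact hf hcg.symm

/-- Injectivity of the restricted bonding map at level 0, via rigidity at shift `-1`
and the Hopf property of the image subgroup. -/
theorem key_inj (φ : ∀ n : ℤ, G (n + 1) →* G n) (ψ1 : G 1 ≃* G 0) (ψ2 : G 2 ≃* G 1)
    (sq : ∀ x : G 2, ψ1 ((φ 1 : G (1 + 1) →* G 1) x) = (φ 0 : G (0 + 1) →* G 0) (ψ2 x))
    (hstab' : Subgroup.map (φ 0 : G (0 + 1) →* G 0) (φ 1).range = (φ 0).range)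
    (hfg : Group.FG (G 0)) (hrf : ResiduallyFinite (G 0)) :
    ∀ x ∈ (φ 1).range, ∀ y ∈ (φ 1).range,
      (φ 0 : G (0 + 1) →* G 0) x = (φ 0 : G (0 + 1) →* G 0) y → x = y := by
  set S : Subgroup (G 0) := (φ 0).range with hSdef
  set E : G 0 →* G 0 := (φ 0).comp ψ1.symm.toMonoidHom with hEdef
  have hEapp : ∀ z : G 0, E z = (φ 0 : G (0 + 1) →* G 0) (ψ1.symm z) := fun z => rfl
  -- membership transfer along ψ1
  have hpsi : ∀ y : G 1, y ∈ (φ 1).range ↔ ψ1 y ∈ S := by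
    intro y
    constructor
    · rintro ⟨u, rfl⟩
      exact ⟨ψ2 u, (sq u).symm⟩
    · rintro ⟨v, hv⟩
      refine ⟨ψ2.symm v, ψ1.injective ?_⟩
      rw [sq (ψ2.symm v), MulEquiv.apply_symm_apply, hv]
  -- E has range S
  have hrange : E.range = S := by
    ext z
    constructor
    · rintro ⟨y, rfl⟩
      exact ⟨ψ1.symm y, rfl⟩
    · rintro ⟨y, rfl⟩
      exact ⟨ψ1 y, by rw [hEapp, MulEquiv.symm_apply_apply]⟩
  -- E maps S to S
  have hmaps : ∀ s : S, E (s : G 0) ∈ S := by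
    rintro ⟨s, hs⟩
    have h1 : ψ1.symm s ∈ (φ 1).range := by
      rw [hpsi, MulEquiv.apply_symm_apply]; exact hs
    have h2 : E s ∈ Subgroup.map (φ 0 : G (0 + 1) →* G 0) (φ 1).range :=
      Subgroup.mem_map.mpr ⟨ψ1.symm s, h1, rfl⟩
    rwa [hstab'] at h2
  set Ehat : S →* S := MonoidHom.codRestrict (E.comp S.subtype) S (fun x => hmaps x) with hEhat
  have hEhatapp : ∀ s : S, (Ehat s : G 0) = E (s : G 0) := fun s => rfl
  -- Ehat is surjective
  have hsurj : Function.Surjective Ehat := by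
    rintro ⟨t, ht⟩
    have ht' : t ∈ Subgroup.map (φ 0 : G (0 + 1) →* G 0) (φ 1).range := by
      rw [hstab']; exact ht
    obtain ⟨x, hx, rfl⟩ := Subgroup.mem_map.mp ht'
    refine ⟨⟨ψ1 x, (hpsi x).mp hx⟩, Subtype.ext ?_⟩
    rw [hEhatapp, hEapp, MulEquiv.symm_apply_apply]
  -- S is finitely generated
  have hfgS : Group.FG S := by
    have h1 : Group.FG E.range := @Group.fg_of_surjective _ _ _ _ hfg
      E.rangeRestrict E.rangeRestrict_surjective
    exact hrange ▸ h1
  -- S is residually finite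
  have hrfS : ResiduallyFinite S := by
    rintro ⟨s, hs⟩ hne
    have hs1 : s ≠ 1 := by
      intro h; exact hne (Subtype.ext h)
    obtain ⟨K, iK, fK, f, hf⟩ := hrf s hs1
    exact ⟨K, iK, fK, f.comp S.subtype, hf⟩
  have hinj : Function.Injective Ehat := hopfian hfgS hrfS Ehat hsurj
  -- conclude
  intro x hx y hy hxy
  have h1 : Ehat ⟨ψ1 x, (hpsi x).mp hx⟩ = Ehat ⟨ψ1 y, (hpsi y).mp hy⟩ := by
    refine Subtype.ext ?_
    rw [hEhatapp, hEhatapp, hEapp, hEapp]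
    simp only [MulEquiv.symm_apply_apply]
    exact hxy
  have h2 : ψ1 x = ψ1 y := congrArg Subtype.val (hinj h1)
  exact ψ1.injective h2

/-- Transfer of the level-0 statement to level `n` via rigidity. -/
theorem transfer (φ : ∀ n : ℤ, G (n + 1) →* G n) {n : ℤ}
    (ψ0 : G 0 ≃* G (n + 0)) (e1 : G 1 ≃* G (n + 1)) (e2 : G 2 ≃* G (n + 2))
    (sq0 : ∀ x : G 1, ψ0 (φ 0 x) = φ (n + 0) (castHom (by ring) (e1 x)))
    (sq1 : ∀ x : G 2, e1 (φ 1 x) = φ (n + 1) (castHom (by ring) (e2 x)))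
    (inj0 : ∀ x ∈ (φ 1).range, ∀ y ∈ (φ 1).range, φ 0 x = φ 0 y → x = y)
    (surj0 : ∀ z ∈ (φ 0).range, ∃ x ∈ (φ 1).range, φ 0 x = z) :
    Function.Bijective
      (fun x : (φ (n + 1)).range =>
        (⟨φ n (x : G (n + 1)), MonoidHom.mem_range.mpr ⟨(x : G (n + 1)), rfl⟩⟩ :
          (φ n).range)) := by
  have h2 : n + 2 = n + 1 + 1 := by ring
  have h0 : n + 0 = n := by ring
  have h01 : n + 1 = n + 0 + 1 := by ring
  -- key: φ n (e1 x) corresponds to φ 0 x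
  have key : ∀ x : G 1, φ n (e1 x) = castHom h0 (ψ0 (φ 0 x)) := by
    intro x
    rw [sq0 x, castHom_phi φ h0 (by ring), castHom_trans, castHom_rfl]
  have keyinj : Function.Injective (fun z : G 0 => castHom h0 (ψ0 z)) :=
    (castHom_inj h0).comp ψ0.injective
  -- membership transfer along e1
  have hmem1 : ∀ x : G 1, x ∈ (φ 1).range ↔ e1 x ∈ (φ (n + 1)).range := by
    intro x
    constructor
    · rintro ⟨u, rfl⟩
      exact ⟨castHom h2 (e2 u), (sq1 u).symm⟩
    · rintro ⟨v, hv⟩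
      refine ⟨e2.symm (castHom h2.symm v), e1.injective ?_⟩
      rw [sq1, MulEquiv.apply_symm_apply, castHom_trans, castHom_rfl, hv]
  -- injectivity at level n
  have injn : ∀ x ∈ (φ (n + 1)).range, ∀ y ∈ (φ (n + 1)).range, φ n x = φ n y → x = y := by
    intro x hx y hy hxy
    have hax : e1 (e1.symm x) = x := e1.apply_symm_apply x
    have hay : e1 (e1.symm y) = y := e1.apply_symm_apply y
    have hx' : e1.symm x ∈ (φ 1).range := (hmem1 _).mpr (by rw [hax]; exact hx)
    have hy' : e1.symm y ∈ (φ 1).range := (hmem1 _).mpr (by rw [hay]; exact hy)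
    have : castHom h0 (ψ0 (φ 0 (e1.symm x))) = castHom h0 (ψ0 (φ 0 (e1.symm y))) := by
      rw [← key, ← key, hax, hay]; exact hxy
    have h3 : φ 0 (e1.symm x) = φ 0 (e1.symm y) := keyinj this
    have h4 : e1.symm x = e1.symm y := inj0 _ hx' _ hy' h3
    rw [← hax, ← hay, h4]
  -- surjectivity at level n
  have surjn : ∀ z ∈ (φ n).range, ∃ x ∈ (φ (n + 1)).range, φ n x = z := by
    rintro z ⟨w, rfl⟩
    have hw : φ n w = castHom h0 (ψ0 (φ 0 (e1.symm w))) := by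
      rw [← key, e1.apply_symm_apply]
    obtain ⟨x, hx, hfx⟩ := surj0 (φ 0 (e1.symm w)) ⟨e1.symm w, rfl⟩
    refine ⟨e1 x, (hmem1 x).mp hx, ?_⟩
    rw [key, hfx, ← hw]
  constructor
  · rintro ⟨x, hx⟩ ⟨y, hy⟩ h
    have h' : φ n x = φ n y := congrArg Subtype.val h
    exact Subtype.ext (injn x hx y hy h')
  · rintro ⟨z, hz⟩
    obtain ⟨x, hx, hfx⟩ := surjn z hz
    exact ⟨⟨x, hx⟩, Subtype.ext hfx⟩

theorem restricted_bonding_maps_isomorphisms (φ : ∀ n : ℤ, G (n + 1) →* G n)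
    (hrigid : Rigid φ) (hstab : F φ 1 = F φ 2)
    (hfg : Group.FG (G 0)) (hrf : ResiduallyFinite (G 0)) :
    ∀ n : ℤ, Function.Bijective
      (fun x : (φ (n + 1)).range =>
        (⟨φ n (x : G (n + 1)), MonoidHom.mem_range.mpr ⟨(x : G (n + 1)), rfl⟩⟩ :
          (φ n).range)) := by
  -- compute F 1 and F 2
  have hchain1 : chain φ 0 1 = φ 0 := by
    ext x; rfl
  have hchain2 : chain φ 0 2 = (φ 0).comp (φ 1) := by
    ext x; rfl
  have hstab' : Subgroup.map (φ 0) (φ 1).range = (φ 0).range := by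
    have h1 : F φ 1 = (φ 0).range := by rw [F, hchain1]
    have h2 : F φ 2 = Subgroup.map (φ 0) (φ 1).range := by
      rw [F, hchain2, MonoidHom.range_comp]
    rw [← h2, ← hstab, h1]
  -- injectivity at level 0 via rigidity at shift -1
  obtain ⟨ψ, hψ⟩ := hrigid 2 (by norm_num) (-1)
  have inj0 : ∀ x ∈ (φ 1).range, ∀ y ∈ (φ 1).range, φ 0 x = φ 0 y → x = y :=
    key_inj φ (ψ 1 (by norm_num)) (ψ 2 le_rfl) (fun x => hψ 1 le_rfl x) hstab' hfg hrf
  have surj0 : ∀ z ∈ (φ 0).range, ∃ x ∈ (φ 1).range, φ 0 x = z := by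
    intro z hz
    rw [← hstab'] at hz
    exact Subgroup.mem_map.mp hz
  intro n
  obtain ⟨ψ', hψ'⟩ := hrigid 2 (by norm_num) n
  exact transfer φ (ψ' 0 (by norm_num)) (ψ' 1 (by norm_num)) (ψ' 2 le_rfl)
    (fun x => hψ' 0 (by norm_num) x) (fun x => hψ' 1 le_rfl x) inj0 surj0
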